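/- Let Φ = [(Φ_K)ᵀ, (b₁,...,b_{M-K})]ᵀ be the concatenation of any K×N matrix Φ_K and the first M−K principal directions of Σ, assumed to have full row rank. Then the MSE of the MAP linear decoder with Φ is at most Σ_{n=M-K+1}^N λ_n, i.e., at most the MSE of sensing with the first M−K principal directions alone. -/

import Mathlib

open Matrix Finset

/-! The error covariance `E = Σ - ΣΦᵀ(ΦΣΦᵀ)⁻¹ΦΣ` satisfies `E Φᵀ = 0` and `0 ≤ Σ - E`. Expanding
`tr E = ∑ₙ bₙᵀ E bₙ` in the eigenbasis of `Σ`, the first term kills every `bₙ` that is a row of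
`Φ`, i.e. every `n < M - K`, and the second bounds each remaining term by `bₙᵀ Σ bₙ = λₙ`. -/

namespace Matrix

variable {m n : Type*} [Fintype m] [Fintype n]

theorem linearIndependent_row_of_rank_eq_card {A : Matrix m n ℝ} (h : A.rank = Fintype.card m) :
    LinearIndependent ℝ A.row := by
  rw [linearIndependent_iff_card_eq_finrank_span, Set.finrank, ← rank_eq_finrank_span_row, h]

theorem trace_eq_sum_diag_transpose_mul_mul [DecidableEq n] (A : Matrix n n ℝ) {B : Matrix n n ℝ}
    (hB : Bᵀ * B = 1) : A.trace = ∑ i, (Bᵀ * A * B) i i := by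
  have h : (Bᵀ * A * B).trace = A.trace := by
    rw [trace_mul_cycle, mul_eq_one_comm.mp hB, Matrix.one_mul]
  exact h.symm

variable [DecidableEq m]

/-- The error covariance of the linear MMSE (MAP) estimate of a centred vector with covariance
`Sig` from the measurements `Φ x`. -/
noncomputable def posteriorCov (Sig : Matrix n n ℝ) (Φ : Matrix m n ℝ) : Matrix n n ℝ :=
  Sig - Sig * Φᵀ * (Φ * Sig * Φᵀ)⁻¹ * Φ * Sig

theorem posteriorCov_mul_transpose {Sig : Matrix n n ℝ} {Φ : Matrix m n ℝ}
    (h : IsUnit (Φ * Sig * Φᵀ).det) : posteriorCov Sig Φ * Φᵀ = 0 := by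
  have hcancel : (Φ * Sig * Φᵀ)⁻¹ * (Φ * Sig * Φᵀ) = 1 := nonsing_inv_mul _ h
  calc posteriorCov Sig Φ * Φᵀ
      = Sig * Φᵀ - Sig * Φᵀ * ((Φ * Sig * Φᵀ)⁻¹ * (Φ * Sig * Φᵀ)) := by
        simp only [posteriorCov, Matrix.sub_mul, Matrix.mul_assoc]
    _ = 0 := by rw [hcancel, Matrix.mul_one, sub_self]

theorem posteriorCov_mul_apply_eq_zero {Sig : Matrix n n ℝ} {Φ : Matrix m n ℝ}
    (h : IsUnit (Φ * Sig * Φᵀ).det) {l : Type*} [Fintype l] (B : Matrix n l ℝ) {k : l} {r : m}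
    (hcol : ∀ i, B i k = Φ r i) (i : n) : (posteriorCov Sig Φ * B) i k = 0 := by
  have := congrFun (congrFun (posteriorCov_mul_transpose h) i) r
  simpa only [mul_apply, transpose_apply, ← hcol, zero_apply] using this

theorem posSemidef_sub_posteriorCov {Sig : Matrix n n ℝ} (hSig : Sig.PosSemidef)
    (Φ : Matrix m n ℝ) : (Sig - posteriorCov Sig Φ).PosSemidef := by
  have hGinv : (Φ * Sig * Φᴴ)⁻¹.PosSemidef := (hSig.mul_mul_conjTranspose_same Φ).inv
  have hSigT : Sigᵀ = Sig := by simpa using hSig.isHermitian.eq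
  convert hGinv.mul_mul_conjTranspose_same (Sig * Φᵀ) using 1
  simp [posteriorCov, Matrix.transpose_mul, hSigT, Matrix.mul_assoc]

theorem diag_transpose_mul_posteriorCov_mul_le {Sig : Matrix n n ℝ} (hSig : Sig.PosSemidef)
    (Φ : Matrix m n ℝ) {l : Type*} [Fintype l] (B : Matrix n l ℝ) (k : l) :
    (Bᵀ * posteriorCov Sig Φ * B) k k ≤ (Bᵀ * Sig * B) k k := by
  have h :=
    ((posSemidef_sub_posteriorCov hSig Φ).conjTranspose_mul_mul_same B).diag_nonneg (i := k)
  rw [conjTranspose_eq_transpose_of_trivial, Matrix.mul_sub, Matrix.sub_mul, sub_apply] at h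
  linarith

end Matrix

theorem stmt14_general {N M K : ℕ} (hMN : M ≤ N)
    (Sig B : Matrix (Fin N) (Fin N) ℝ) (lam : Fin N → ℝ)
    (hB : Bᵀ * B = 1)
    (hSig : Sig = B * Matrix.diagonal lam * Bᵀ)
    (hSigPD : Sig.PosDef)
    (ΦK : Matrix (Fin K) (Fin N) ℝ)
    (ΦP : Matrix (Fin (M - K)) (Fin N) ℝ)
    (hPhiP : ∀ (m : Fin (M - K)) (i : Fin N),
      ΦP m i = B i (Fin.castLE (le_trans (Nat.sub_le M K) hMN) m))
    (hrank : (Matrix.fromRows ΦK ΦP).rank = K + (M - K)) :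
    letI Φ := Matrix.fromRows ΦK ΦP
    (Sig - Sig * Φᵀ * (Φ * Sig * Φᵀ)⁻¹ * Φ * Sig).trace
      ≤ ∑ n ∈ Finset.univ.filter (fun n : Fin N => M - K ≤ (n : ℕ)), lam n := by
  set Φ := fromRows ΦK ΦP
  set E := posteriorCov Sig Φ
  have hG : IsUnit (Φ * Sig * Φᵀ).det := by
    have hli : LinearIndependent ℝ Φ.row :=
      linearIndependent_row_of_rank_eq_card (by simpa [Φ] using hrank)
    exact (isUnit_iff_isUnit_det _).mp
      (hSigPD.mul_mul_conjTranspose_same (vecMul_injective_iff.mpr hli)).isUnit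
  have hBSigB : Bᵀ * Sig * B = diagonal lam := by
    rw [hSig, show Bᵀ * (B * diagonal lam * Bᵀ) * B = Bᵀ * B * diagonal lam * (Bᵀ * B) by
      simp only [Matrix.mul_assoc], hB, Matrix.one_mul, Matrix.mul_one]
  have hhead : ∀ n : Fin N, (n : ℕ) < M - K → (Bᵀ * E * B) n n = 0 := fun n hn => by
    have hcol : ∀ i, (E * B) i n = 0 := posteriorCov_mul_apply_eq_zero hG B
      (r := Sum.inr ⟨n, hn⟩) (fun i => by simp [Φ, hPhiP])
    simp [Matrix.mul_assoc, mul_apply (M := Bᵀ), hcol]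
  have htail : ∀ n, (Bᵀ * E * B) n n ≤ lam n := fun n => by
    simpa [hBSigB] using diag_transpose_mul_posteriorCov_mul_le hSigPD.posSemidef Φ B n
  change E.trace ≤ _
  rw [trace_eq_sum_diag_transpose_mul_mul E hB, ← Finset.sum_filter_of_ne fun n _ hne =>
    not_lt.mp fun hn => hne (hhead n hn)]
  exact Finset.sum_le_sum fun n _ => htail n

/-- stacking an arbitrary `K×N` matrix with the first `M−K`
principal directions of `Σ` yields an MAP-decoder MSE at most the tail sum
`Σ_{n=M-K+1}^N λ_n`, the MSE of the principal directions alone. -/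
theorem stmt14 {N M K : ℕ} (hK : K ≤ M) (hMN : M ≤ N)
    (Sig B : Matrix (Fin N) (Fin N) ℝ) (lam : Fin N → ℝ)
    (hB : Bᵀ * B = 1)
    (hSig : Sig = B * Matrix.diagonal lam * Bᵀ)
    (hSigPD : Sig.PosDef)
    (hsort : ∀ i j : Fin N, i ≤ j → lam j ≤ lam i)
    (hpos : ∀ i, 0 < lam i)
    (ΦK : Matrix (Fin K) (Fin N) ℝ)
    (ΦP : Matrix (Fin (M - K)) (Fin N) ℝ)
    (hPhiP : ∀ (m : Fin (M - K)) (i : Fin N),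
      ΦP m i = B i (Fin.castLE (le_trans (Nat.sub_le M K) hMN) m))
    (hrank : (Matrix.fromRows ΦK ΦP).rank = K + (M - K)) :
    letI Φ := Matrix.fromRows ΦK ΦP
    (Sig - Sig * Φᵀ * (Φ * Sig * Φᵀ)⁻¹ * Φ * Sig).trace
      ≤ ∑ n ∈ Finset.univ.filter (fun n : Fin N => M - K ≤ (n : ℕ)), lam n :=
  stmt14_general hMN Sig B lam hB hSig hSigPD ΦK ΦP hPhiP hrank
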